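/- arXiv:0706.1896 — 8 statements merged into one kernel-verified Lean document; each statement's English description precedes it below -/
import Mathlib

section
/- Let A be a bounded positive self-adjoint operator on a Hilbert space H, let h₀ ∈ H, and suppose there is a constant C ≥ 0 such that |⟨h₀, h⟩|² ≤ C‖√A h‖² for all h ∈ H. Then there exists a vector g₀ in the closure of the range of A with √A g₀ = h₀ and ‖g₀‖² ≤ C. -/
/-!
The bound says that `h ↦ ⟪h₀, h⟫` factors through `√A` as a functional of norm at most `√C` on
the range of `√A`. Hahn–Banach and Riesz represent it by a vector `g` with `‖g‖ ≤ √C`, and the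
orthogonal projection `g₀` of `g` onto the closure of the range of `A` still represents it,
because that closure is also the closure of the range of `√A` (as `ker A = ker √A`).
Self-adjointness of `√A` turns `⟪g₀, √A h⟫ = ⟪h₀, h⟫` into `√A g₀ = h₀`.
-/

open scoped InnerProductSpace InnerProduct
open ContinuousLinearMap

section Factorization

variable {𝕜 E F : Type*} [RCLike 𝕜] [NormedAddCommGroup E] [NormedSpace 𝕜 E]
  [NormedAddCommGroup F] [NormedSpace 𝕜 F]

theorem LinearMap.exists_strongDual_comp_eq_of_norm_le (T : E →ₗ[𝕜] F) (f : E →ₗ[𝕜] 𝕜)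
    {c : ℝ} (hc : 0 ≤ c) (hf : ∀ x, ‖f x‖ ≤ c * ‖T x‖) :
    ∃ g : StrongDual 𝕜 F, ‖g‖ ≤ c ∧ ∀ x, g (T x) = f x := by
  have hker : LinearMap.ker T ≤ LinearMap.ker f := fun x hx => by
    simpa [LinearMap.mem_ker.mp hx] using hf x
  set φ : LinearMap.range T →ₗ[𝕜] 𝕜 :=
    ((LinearMap.ker T).liftQ f hker).comp T.quotKerEquivRange.symm.toLinearMap
  have hφ (x : E) : φ ⟨T x, LinearMap.mem_range_self T x⟩ = f x := by
    simp [φ, T.quotKerEquivRange_symm_apply_image]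
  have hφ_le : ∀ y, ‖φ y‖ ≤ c * ‖y‖ := by
    rintro ⟨_, x, rfl⟩
    exact (hφ x).symm ▸ hf x
  obtain ⟨g, hg, hg_norm⟩ := exists_extension_norm_eq _ (φ.mkContinuous c hφ_le)
  exact ⟨g, hg_norm ▸ φ.mkContinuous_norm_le hc hφ_le, fun x => (hg _).trans (hφ x)⟩

end Factorization

section Hilbert

variable {𝕜 E H : Type*} [RCLike 𝕜] [NormedAddCommGroup E] [NormedSpace 𝕜 E]
  [NormedAddCommGroup H] [InnerProductSpace 𝕜 H] [CompleteSpace H]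

theorem LinearMap.exists_mem_closure_range_inner_eq_of_norm_le (T : E →ₗ[𝕜] H)
    (f : E →ₗ[𝕜] 𝕜) {c : ℝ} (hc : 0 ≤ c) (hf : ∀ x, ‖f x‖ ≤ c * ‖T x‖) :
    ∃ v ∈ (LinearMap.range T).topologicalClosure, ‖v‖ ≤ c ∧ ∀ x, ⟪v, T x⟫_𝕜 = f x := by
  obtain ⟨g, hg_norm, hg⟩ := T.exists_strongDual_comp_eq_of_norm_le f hc hf
  set K := (LinearMap.range T).topologicalClosure
  have : CompleteSpace K := (LinearMap.range T).isClosed_topologicalClosure.completeSpace_coe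
  set w := (InnerProductSpace.toDual 𝕜 H).symm g
  refine ⟨K.starProjection w, K.starProjection_apply_mem w, ?_, fun x => ?_⟩
  · calc ‖K.starProjection w‖ ≤ ‖w‖ := K.norm_starProjection_apply_le w
      _ = ‖g‖ := LinearIsometryEquiv.norm_map _ _
      _ ≤ c := hg_norm
  · have hTx : T x ∈ K := (LinearMap.range T).le_topologicalClosure (LinearMap.mem_range_self T x)
    rw [K.inner_starProjection_left_eq_right, K.starProjection_eq_self_iff.mpr hTx,
      InnerProductSpace.toDual_symm_apply, hg]

end Hilbert

section Adjoint

variable {𝕜 E F : Type*} [RCLike 𝕜] [NormedAddCommGroup E] [InnerProductSpace 𝕜 E]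
  [CompleteSpace E] [NormedAddCommGroup F] [InnerProductSpace 𝕜 F] [CompleteSpace F]

theorem ContinuousLinearMap.closure_range_adjoint_comp_self (T : E →L[𝕜] F) :
    (T† ∘L T).range.topologicalClosure = T†.range.topologicalClosure := by
  rw [← Submodule.orthogonal_orthogonal_eq_closure, ← Submodule.orthogonal_orthogonal_eq_closure,
    orthogonal_range, orthogonal_range, adjoint_comp, adjoint_adjoint, ker_adjoint_comp_self]

end Adjoint

set_option synthInstance.maxHeartbeats 1000000 in
/-- Block-matrix lemma (Proposition 1): if `A ≥ 0` is a bounded positive self-adjoint operator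
on a complex Hilbert space `H`, `h₀ ∈ H` and `|⟨h₀, h⟩|² ≤ C‖√A h‖²` for all `h`, then there is
`g₀` in the closure of the range of `A` with `√A g₀ = h₀` and `‖g₀‖² ≤ C`. -/
theorem block_matrix_lemma_exists
    (H : Type*) [NormedAddCommGroup H] [InnerProductSpace ℂ H] [CompleteSpace H]
    (A : H →L[ℂ] H) (hA : A.IsPositive) (h₀ : H) (C : ℝ) (hC : 0 ≤ C)
    (hbound : ∀ h : H, ‖⟪h₀, h⟫_ℂ‖ ^ 2 ≤ C * ‖CFC.sqrt A h‖ ^ 2) :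
    ∃ g₀ ∈ closure (Set.range (A : H → H)),
      CFC.sqrt A g₀ = h₀ ∧ ‖g₀‖ ^ 2 ≤ C := by
  set S := CFC.sqrt A
  have hS : IsSelfAdjoint S := (CFC.sqrt_nonneg A).isSelfAdjoint
  have hA_eq : S† ∘L S = A := by
    rw [hS.adjoint_eq]; exact CFC.sqrt_mul_sqrt_self A ((nonneg_iff_isPositive A).mpr hA)
  have hf (h : H) : ‖innerSL ℂ h₀ h‖ ≤ √C * ‖S h‖ := by
    rw [← pow_le_pow_iff_left₀ (norm_nonneg _) (by positivity) two_ne_zero, mul_pow,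
      Real.sq_sqrt hC]
    exact hbound h
  obtain ⟨g₀, hg₀_mem, hg₀_norm, hg₀⟩ :=
    (S : H →ₗ[ℂ] H).exists_mem_closure_range_inner_eq_of_norm_le _ (Real.sqrt_nonneg C) hf
  refine ⟨g₀, ?_, ext_inner_right ℂ fun h => ?_, ?_⟩
  · have h_closure := S.closure_range_adjoint_comp_self
    rw [hA_eq, hS.adjoint_eq] at h_closure
    have : g₀ ∈ ((A : H →ₗ[ℂ] H).range.topologicalClosure : Set H) := h_closure ▸ hg₀_mem
    rwa [Submodule.topologicalClosure_coe, LinearMap.coe_range] at this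
  · exact (hS.isSymmetric g₀ h).trans (hg₀ h)
  · calc ‖g₀‖ ^ 2 ≤ √C ^ 2 := by gcongr
      _ = C := Real.sq_sqrt hC
end

section
/- Let s : L → L' be a strict contraction (‖s‖ < 1) and S = [[I_{L'}, s],[s*, I_L]] on L' ⊕ L. Then S is invertible and for all ℓ' ∈ L', ℓ ∈ L: ⟨S⁻¹(ℓ' ⊕ ℓ), ℓ' ⊕ ℓ⟩ = ⟨ℓ', ℓ'⟩ + ⟨(I_L - s*s)⁻¹(ℓ - s*ℓ'), ℓ - s*ℓ'⟩. -/
/-!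
Since `‖s*s‖ = ‖s‖² < 1`, the Schur complement `D = I - s*s` of `S` is invertible, and solving
`S(x' ⊕ x) = ℓ' ⊕ ℓ` gives `x = D⁻¹(ℓ - s*ℓ')`, `x' = ℓ' - s x`. Pairing `x' ⊕ x` with `ℓ' ⊕ ℓ` and
moving `s` across the inner product, `⟨x', ℓ'⟩ + ⟨x, ℓ⟩ = ⟨ℓ', ℓ'⟩ + ⟨x, ℓ - s*ℓ'⟩`.
-/

open scoped InnerProductSpace

/-- The block operator `S = [[I, s],[s*, I]]` on the Hilbert-space direct sum `L' ⊕ L`,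
acting by `S(ℓ' ⊕ ℓ) = (ℓ' + sℓ) ⊕ (s*ℓ' + ℓ)`. -/
noncomputable def blockOp (L L' : Type*) [NormedAddCommGroup L] [InnerProductSpace ℂ L]
    [CompleteSpace L] [NormedAddCommGroup L'] [InnerProductSpace ℂ L'] [CompleteSpace L']
    (s : L →L[ℂ] L') : WithLp 2 (L' × L) →L[ℂ] WithLp 2 (L' × L) :=
  letI e := WithLp.prodContinuousLinearEquiv 2 ℂ L' L
  (e.symm.toContinuousLinearMap) ∘L
    (((ContinuousLinearMap.fst ℂ L' L + s ∘L ContinuousLinearMap.snd ℂ L' L).prod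
      ((ContinuousLinearMap.adjoint s) ∘L ContinuousLinearMap.fst ℂ L' L
        + ContinuousLinearMap.snd ℂ L' L)) ∘L e.toContinuousLinearMap)

open ContinuousLinearMap

lemma isUnit_one_sub_adjoint_comp_self {𝕜 E F : Type*} [RCLike 𝕜] [NormedAddCommGroup E]
    [InnerProductSpace 𝕜 E] [CompleteSpace E] [NormedAddCommGroup F] [InnerProductSpace 𝕜 F]
    [CompleteSpace F] {s : E →L[𝕜] F} (hs : ‖s‖ < 1) : IsUnit (1 - adjoint s ∘L s) :=
  isUnit_one_sub_of_norm_lt_one <| by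
    rw [norm_adjoint_comp_self]
    nlinarith [norm_nonneg s]

section BlockOp

variable {L L' : Type*} [NormedAddCommGroup L] [InnerProductSpace ℂ L] [CompleteSpace L]
  [NormedAddCommGroup L'] [InnerProductSpace ℂ L'] [CompleteSpace L']

@[simp]
lemma blockOp_apply (s : L →L[ℂ] L') (ℓ' : L') (ℓ : L) :
    blockOp L L' s (WithLp.toLp 2 (ℓ', ℓ)) = WithLp.toLp 2 (ℓ' + s ℓ, adjoint s ℓ' + ℓ) :=
  rfl

noncomputable def blockOpInv (s : L →L[ℂ] L') (g : L →L[ℂ] L) :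
    WithLp 2 (L' × L) →L[ℂ] WithLp 2 (L' × L) :=
  letI e := WithLp.prodContinuousLinearEquiv 2 ℂ L' L
  letI y := g ∘L (snd ℂ L' L - adjoint s ∘L fst ℂ L' L)
  e.symm.toContinuousLinearMap ∘L ((fst ℂ L' L - s ∘L y).prod y) ∘L e.toContinuousLinearMap

@[simp]
lemma blockOpInv_apply (s : L →L[ℂ] L') (g : L →L[ℂ] L) (ℓ' : L') (ℓ : L) :
    blockOpInv s g (WithLp.toLp 2 (ℓ', ℓ)) =
      WithLp.toLp 2 (ℓ' - s (g (ℓ - adjoint s ℓ')), g (ℓ - adjoint s ℓ')) :=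
  rfl

lemma blockOp_mul_blockOpInv {s : L →L[ℂ] L'} {g : L →L[ℂ] L}
    (hg : (1 - adjoint s ∘L s) * g = 1) : blockOp L L' s * blockOpInv s g = 1 := by
  ext1 ⟨ℓ', ℓ⟩
  have h := congr($hg (ℓ - adjoint s ℓ'))
  simp only [mul_apply_eq_comp, sub_apply, one_apply_eq_self, comp_apply] at h
  simp only [mul_apply_eq_comp, blockOp_apply, blockOpInv_apply, one_apply_eq_self]
  set y := ℓ - adjoint s ℓ' with hy
  rw [sub_add_cancel, map_sub]
  congr 2
  linear_combination (norm := abel) h + hy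

lemma blockOpInv_mul_blockOp {s : L →L[ℂ] L'} {g : L →L[ℂ] L}
    (hg : g * (1 - adjoint s ∘L s) = 1) : blockOpInv s g * blockOp L L' s = 1 := by
  ext1 ⟨ℓ', ℓ⟩
  have h := congr($hg ℓ)
  simp only [mul_apply_eq_comp, sub_apply, one_apply_eq_self, comp_apply] at h
  simp only [mul_apply_eq_comp, blockOp_apply, blockOpInv_apply, one_apply_eq_self, map_add,
    add_sub_add_left_eq_sub, h, add_sub_cancel_right]

lemma inner_blockOpInv_apply_self (s : L →L[ℂ] L') (g : L →L[ℂ] L) (ℓ' : L') (ℓ : L) :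
    ⟪blockOpInv s g (WithLp.toLp 2 (ℓ', ℓ)), WithLp.toLp 2 (ℓ', ℓ)⟫_ℂ =
      ⟪ℓ', ℓ'⟫_ℂ + ⟪g (ℓ - adjoint s ℓ'), ℓ - adjoint s ℓ'⟫_ℂ := by
  rw [blockOpInv_apply, WithLp.prod_inner_apply, inner_sub_left, ← adjoint_inner_right,
    inner_sub_right]
  ring

noncomputable def blockOpUnit {s : L →L[ℂ] L'} (hd : IsUnit (1 - adjoint s ∘L s)) :
    (WithLp 2 (L' × L) →L[ℂ] WithLp 2 (L' × L))ˣ where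
  val := blockOp L L' s
  inv := blockOpInv s (Ring.inverse (1 - adjoint s ∘L s))
  val_inv := blockOp_mul_blockOpInv (Ring.mul_inverse_cancel _ hd)
  inv_val := blockOpInv_mul_blockOp (Ring.inverse_mul_cancel _ hd)

lemma inverse_blockOp {s : L →L[ℂ] L'} (hd : IsUnit (1 - adjoint s ∘L s)) :
    Ring.inverse (blockOp L L' s) = blockOpInv s (Ring.inverse (1 - adjoint s ∘L s)) :=
  Ring.inverse_unit (blockOpUnit hd)

end BlockOp

/-- For a strict contraction `s : L → L'`, the block operator `S = [[I, s],[s*, I]]` is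
invertible, `I - s*s` is invertible, and
`⟨S⁻¹(ℓ' ⊕ ℓ), ℓ' ⊕ ℓ⟩ = ⟨ℓ', ℓ'⟩ + ⟨(I - s*s)⁻¹(ℓ - s*ℓ'), ℓ - s*ℓ'⟩`. -/
theorem blockOp_inv_inner_first
    (L L' : Type*) [NormedAddCommGroup L] [InnerProductSpace ℂ L] [CompleteSpace L]
    [NormedAddCommGroup L'] [InnerProductSpace ℂ L'] [CompleteSpace L']
    (s : L →L[ℂ] L') (hs : ‖s‖ < 1) :
    IsUnit (blockOp L L' s) ∧ IsUnit (1 - ContinuousLinearMap.adjoint s ∘L s) ∧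
      ∀ (ℓ' : L') (ℓ : L),
        ⟪Ring.inverse (blockOp L L' s) ((WithLp.equiv 2 (L' × L)).symm (ℓ', ℓ)),
            (WithLp.equiv 2 (L' × L)).symm (ℓ', ℓ)⟫_ℂ
          = ⟪ℓ', ℓ'⟫_ℂ
            + ⟪Ring.inverse (1 - ContinuousLinearMap.adjoint s ∘L s)
                  (ℓ - ContinuousLinearMap.adjoint s ℓ'),
                ℓ - ContinuousLinearMap.adjoint s ℓ'⟫_ℂ := by
  have hd := isUnit_one_sub_adjoint_comp_self hs
  refine ⟨(blockOpUnit hd).isUnit, hd, fun ℓ' ℓ => ?_⟩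
  rw [inverse_blockOp hd]
  exact inner_blockOpInv_apply_self s _ ℓ' ℓ
end

section
/- Let s : L → L' be a strict contraction and S = [[I_{L'}, s],[s*, I_L]] on L' ⊕ L. Then for all ℓ' ∈ L', ℓ ∈ L: ⟨S⁻¹(ℓ' ⊕ ℓ), ℓ' ⊕ ℓ⟩ = ⟨ℓ, ℓ⟩ + ⟨(I_{L'} - ss*)⁻¹(ℓ' - sℓ), ℓ' - sℓ⟩. -/
/-!
Eliminating the second coordinate from `S (u ⊕ v) = ℓ' ⊕ ℓ` gives `v = ℓ - s* u` and
`(I - ss*) u = ℓ' - sℓ`, where `I - ss*` is invertible by the Neumann series because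
`‖ss*‖ = ‖s‖² < 1`. So `S` is bijective, hence invertible, and
`⟨S⁻¹(ℓ' ⊕ ℓ), ℓ' ⊕ ℓ⟩ = ⟨u, ℓ'⟩ + ⟨ℓ - s* u, ℓ⟩ = ⟨ℓ, ℓ⟩ + ⟨u, ℓ' - sℓ⟩`.
-/

open scoped InnerProductSpace

open ContinuousLinearMap

theorem isUnit_one_sub_comp_adjoint {𝕜 E F : Type*} [RCLike 𝕜] [NormedAddCommGroup E]
    [InnerProductSpace 𝕜 E] [CompleteSpace E] [NormedAddCommGroup F] [InnerProductSpace 𝕜 F]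
    [CompleteSpace F] (s : E →L[𝕜] F) (hs : ‖s‖ < 1) : IsUnit (1 - s ∘L adjoint s) := by
  refine isUnit_one_sub_of_norm_lt_one ?_
  have hnorm := norm_adjoint_comp_self (adjoint s)
  rw [adjoint_adjoint, LinearIsometryEquiv.norm_map] at hnorm
  rw [hnorm]
  nlinarith [norm_nonneg s]

section
variable {L L' : Type*} [NormedAddCommGroup L] [InnerProductSpace ℂ L] [CompleteSpace L]
    [NormedAddCommGroup L'] [InnerProductSpace ℂ L'] [CompleteSpace L'] (s : L →L[ℂ] L')

@[simp]
theorem blockOp_toLp (a : L') (b : L) :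
    blockOp L L' s (WithLp.toLp 2 (a, b)) = WithLp.toLp 2 (a + s b, adjoint s a + b) := rfl

/-- `1 - s s†` is the Schur complement of the lower-right block of `blockOp`. -/
theorem blockOp_toLp_eq_toLp_iff (hD : IsUnit (1 - s ∘L adjoint s)) (u a : L') (v b : L) :
    blockOp L L' s (WithLp.toLp 2 (u, v)) = WithLp.toLp 2 (a, b) ↔
      u = Ring.inverse (1 - s ∘L adjoint s) (a - s b) ∧ v = b - adjoint s u := by
  have hD_apply (w : L') : (1 - s ∘L adjoint s) w = w - s (adjoint s w) := rfl
  have hsolve (w : L') : w = Ring.inverse (1 - s ∘L adjoint s) (a - s b) ↔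
      (1 - s ∘L adjoint s) w = a - s b := by
    constructor
    · rintro rfl
      exact DFunLike.congr_fun (Ring.mul_inverse_cancel _ hD) _
    · intro h
      rw [← h]
      exact (DFunLike.congr_fun (Ring.inverse_mul_cancel _ hD) w).symm
  rw [blockOp_toLp, (WithLp.toLp_injective 2).eq_iff, Prod.mk.injEq, hsolve, hD_apply]
  constructor
  · rintro ⟨hu, hv⟩
    obtain rfl : v = b - adjoint s u := eq_sub_of_add_eq' hv
    refine ⟨?_, rfl⟩
    rw [map_sub] at hu
    linear_combination (norm := module) hu
  · rintro ⟨hu, rfl⟩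
    refine ⟨?_, add_sub_cancel _ _⟩
    rw [map_sub]
    linear_combination (norm := module) hu

theorem bijective_blockOp (hD : IsUnit (1 - s ∘L adjoint s)) :
    Function.Bijective (blockOp L L' s) := by
  refine ⟨(injective_iff_map_eq_zero _).mpr fun x hx => ?_, fun y => ?_⟩
  · obtain ⟨⟨u, v⟩⟩ := x
    obtain ⟨rfl, rfl⟩ := (blockOp_toLp_eq_toLp_iff s hD u 0 v 0).mp hx
    simp
  · obtain ⟨⟨a, b⟩⟩ := y
    set u := Ring.inverse (1 - s ∘L adjoint s) (a - s b)
    exact ⟨WithLp.toLp 2 (u, b - adjoint s u),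
      (blockOp_toLp_eq_toLp_iff s hD _ _ _ _).mpr ⟨rfl, rfl⟩⟩

theorem inner_toLp_of_blockOp_eq (hD : IsUnit (1 - s ∘L adjoint s))
    (x : WithLp 2 (L' × L)) (a : L') (b : L) (hx : blockOp L L' s x = WithLp.toLp 2 (a, b)) :
    ⟪x, WithLp.toLp 2 (a, b)⟫_ℂ =
      ⟪b, b⟫_ℂ + ⟪Ring.inverse (1 - s ∘L adjoint s) (a - s b), a - s b⟫_ℂ := by
  obtain ⟨⟨u, v⟩⟩ := x
  obtain ⟨rfl, rfl⟩ := (blockOp_toLp_eq_toLp_iff s hD u a v b).mp hx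
  simp only [WithLp.prod_inner_apply, inner_sub_left, inner_sub_right, adjoint_inner_left]
  ring

end

open ContinuousLinearMap in
/-- For a strict contraction `s : L → L'`, the block operator `S = [[I, s],[s*, I]]` is
invertible, `I - ss*` is invertible, and
`⟨S⁻¹(ℓ' ⊕ ℓ), ℓ' ⊕ ℓ⟩ = ⟨ℓ, ℓ⟩ + ⟨(I - ss*)⁻¹(ℓ' - sℓ), ℓ' - sℓ⟩`. -/
theorem blockOp_inv_inner_second
    (L L' : Type*) [NormedAddCommGroup L] [InnerProductSpace ℂ L] [CompleteSpace L]
    [NormedAddCommGroup L'] [InnerProductSpace ℂ L'] [CompleteSpace L']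
    (s : L →L[ℂ] L') (hs : ‖s‖ < 1) :
    IsUnit (blockOp L L' s) ∧ IsUnit (1 - s ∘L ContinuousLinearMap.adjoint s) ∧
      ∀ (ℓ' : L') (ℓ : L),
        ⟪Ring.inverse (blockOp L L' s) ((WithLp.equiv 2 (L' × L)).symm (ℓ', ℓ)),
            (WithLp.equiv 2 (L' × L)).symm (ℓ', ℓ)⟫_ℂ
          = ⟪ℓ, ℓ⟫_ℂ
            + ⟪Ring.inverse (1 - s ∘L ContinuousLinearMap.adjoint s) (ℓ' - s ℓ),
                ℓ' - s ℓ⟫_ℂ := by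
  have hD := isUnit_one_sub_comp_adjoint s hs
  have hS : IsUnit (blockOp L L' s) := isUnit_iff_bijective.mpr (bijective_blockOp s hD)
  refine ⟨hS, hD, fun ℓ' ℓ => inner_toLp_of_blockOp_eq s hD _ ℓ' ℓ ?_⟩
  exact DFunLike.congr_fun (Ring.mul_inverse_cancel _ hS) _
end

section
/- For a contraction s : L → L' and vectors ℓ ∈ L, ℓ' ∈ L', the vector ℓ - s*ℓ' lies in the range of (I_L - s*s)^{1/2} if and only if ℓ' - sℓ lies in the range of (I_{L'} - ss*)^{1/2}. -/
open ContinuousLinearMap in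
/-- Range criterion: if `⟪y, z⟫` is bounded by `C * ‖T† z‖` for all `z`, then `y ∈ Ran T`. -/
lemma mem_range_of_inner_bound {H H' : Type*} [NormedAddCommGroup H] [InnerProductSpace ℂ H]
    [CompleteSpace H] [NormedAddCommGroup H'] [InnerProductSpace ℂ H'] [CompleteSpace H']
    (T : H →L[ℂ] H') (y : H') (C : ℝ)
    (hb : ∀ z : H', ‖(inner ℂ y z : ℂ)‖ ≤ C * ‖ContinuousLinearMap.adjoint T z‖) :
    y ∈ Set.range T := by
  classical
  set f : H' →ₗ[ℂ] H := (ContinuousLinearMap.adjoint T).toLinearMap with hf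
  have hker : LinearMap.ker f ≤ LinearMap.ker ((innerSL ℂ y).toLinearMap : H' →ₗ[ℂ] ℂ) := by
    intro z hz
    have hz' : ContinuousLinearMap.adjoint T z = 0 := hz
    have h1 := hb z
    rw [hz', norm_zero, mul_zero] at h1
    have : (inner ℂ y z : ℂ) = 0 := norm_le_zero_iff.mp h1
    simpa [LinearMap.mem_ker] using this
  set g₀ : LinearMap.range f →ₗ[ℂ] ℂ :=
    ((LinearMap.ker f).liftQ ((innerSL ℂ y).toLinearMap : H' →ₗ[ℂ] ℂ) hker).comp
      (f.quotKerEquivRange.symm.toLinearMap) with hg₀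
  have key : ∀ z : H', g₀ ⟨f z, LinearMap.mem_range_self f z⟩ = inner ℂ y z := by
    intro z
    simp only [hg₀, LinearMap.comp_apply, LinearEquiv.coe_coe,
      LinearMap.quotKerEquivRange_symm_apply_image, Submodule.mkQ_apply, Submodule.liftQ_apply]
    rfl
  have hbound : ∀ u : LinearMap.range f, ‖g₀ u‖ ≤ C * ‖(u : H)‖ := by
    rintro ⟨u, hu⟩
    obtain ⟨z, rfl⟩ := hu
    rw [key z]
    exact hb z
  set G₀ : LinearMap.range f →L[ℂ] ℂ := LinearMap.mkContinuous g₀ C hbound with hG₀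
  obtain ⟨G, hG, -⟩ := exists_extension_norm_eq (LinearMap.range f) G₀
  refine ⟨(InnerProductSpace.toDual ℂ H).symm G, ?_⟩
  apply ext_inner_right ℂ
  intro z
  calc (inner ℂ (T ((InnerProductSpace.toDual ℂ H).symm G)) z : ℂ)
      = inner ℂ ((InnerProductSpace.toDual ℂ H).symm G) (ContinuousLinearMap.adjoint T z) :=
        (adjoint_inner_right T _ z).symm
    _ = G (ContinuousLinearMap.adjoint T z) := InnerProductSpace.toDual_symm_apply
    _ = G₀ ⟨f z, LinearMap.mem_range_self f z⟩ := hG ⟨f z, LinearMap.mem_range_self f z⟩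
    _ = inner ℂ y z := by rw [hG₀]; exact key z

open ContinuousLinearMap in
lemma one_sub_adjoint_comp_nonneg {H H' : Type*} [NormedAddCommGroup H] [InnerProductSpace ℂ H]
    [CompleteSpace H] [NormedAddCommGroup H'] [InnerProductSpace ℂ H'] [CompleteSpace H']
    (s : H →L[ℂ] H') (hs : ‖s‖ ≤ 1) :
    (0 : H →L[ℂ] H) ≤ 1 - ContinuousLinearMap.adjoint s ∘L s := by
  rw [nonneg_iff_isPositive]
  constructor
  · have h1 : IsSelfAdjoint (1 : H →L[ℂ] H) := by rw [IsSelfAdjoint, star_one]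
    have h2 : IsSelfAdjoint (ContinuousLinearMap.adjoint s ∘L s) := by
      rw [IsSelfAdjoint, star_eq_adjoint, adjoint_comp, adjoint_adjoint]
    exact (h1.sub h2).isSymmetric
  · intro v
    have h1 : reApplyInnerSelf (1 - ContinuousLinearMap.adjoint s ∘L s) v
        = ‖v‖ ^ 2 - ‖s v‖ ^ 2 := by
      rw [reApplyInnerSelf]
      simp only [sub_apply, one_apply, comp_apply, inner_sub_left]
      rw [map_sub]
      congr 1
      · exact inner_self_eq_norm_sq v
      · rw [adjoint_inner_left]
        exact inner_self_eq_norm_sq (s v)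
    rw [h1]
    have h2 : ‖s v‖ ≤ ‖v‖ := by
      calc ‖s v‖ ≤ ‖s‖ * ‖v‖ := le_opNorm s v
        _ ≤ 1 * ‖v‖ := by gcongr
        _ = ‖v‖ := one_mul _
    nlinarith [norm_nonneg (s v), norm_nonneg v]

set_option maxHeartbeats 1000000 in
set_option synthInstance.maxHeartbeats 1000000 in
open ContinuousLinearMap in
/-- One direction of the defect-range equivalence. -/
lemma defect_range_aux {L L' : Type*} [NormedAddCommGroup L] [InnerProductSpace ℂ L]
    [CompleteSpace L] [NormedAddCommGroup L'] [InnerProductSpace ℂ L'] [CompleteSpace L']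
    (s : L →L[ℂ] L') (hs : ‖s‖ ≤ 1) (ℓ : L) (ℓ' : L')
    (h : ℓ - ContinuousLinearMap.adjoint s ℓ'
        ∈ Set.range ((CFC.sqrt (1 - ContinuousLinearMap.adjoint s ∘L s) : L →L[ℂ] L) : L → L)) :
    ℓ' - s ℓ
        ∈ Set.range ((CFC.sqrt (1 - s ∘L ContinuousLinearMap.adjoint s) : L' →L[ℂ] L') : L' → L') := by
  obtain ⟨x, hx⟩ := h
  set D : L →L[ℂ] L := CFC.sqrt (1 - ContinuousLinearMap.adjoint s ∘L s) with hD
  set D' : L' →L[ℂ] L' := CFC.sqrt (1 - s ∘L ContinuousLinearMap.adjoint s) with hD'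
  have hA : (0 : L →L[ℂ] L) ≤ 1 - ContinuousLinearMap.adjoint s ∘L s :=
    one_sub_adjoint_comp_nonneg s hs
  have hB : (0 : L' →L[ℂ] L') ≤ 1 - s ∘L ContinuousLinearMap.adjoint s := by
    have hs' : ‖ContinuousLinearMap.adjoint s‖ ≤ 1 := by
      rw [LinearIsometryEquiv.norm_map]; exact hs
    have := one_sub_adjoint_comp_nonneg (ContinuousLinearMap.adjoint s) hs'
    rwa [adjoint_adjoint] at this
  have hDsa : ContinuousLinearMap.adjoint D = D :=
    isSelfAdjoint_iff'.mp (IsSelfAdjoint.of_nonneg (CFC.sqrt_nonneg _))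
  have hD'sa : ContinuousLinearMap.adjoint D' = D' :=
    isSelfAdjoint_iff'.mp (IsSelfAdjoint.of_nonneg (CFC.sqrt_nonneg _))
  have hDsq : ∀ v : L, D (D v) = v - ContinuousLinearMap.adjoint s (s v) := by
    intro v
    have h1 : (D * D) v = (1 - ContinuousLinearMap.adjoint s ∘L s) v := by
      rw [hD, CFC.sqrt_mul_sqrt_self _ hA]
    simpa [mul_apply, sub_apply, one_apply, comp_apply] using h1
  have hD'sq : ∀ w : L', D' (D' w) = w - s (ContinuousLinearMap.adjoint s w) := by
    intro w
    have h1 : (D' * D') w = (1 - s ∘L ContinuousLinearMap.adjoint s) w := by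
      rw [hD', CFC.sqrt_mul_sqrt_self _ hB]
    simpa [mul_apply, sub_apply, one_apply, comp_apply] using h1
  -- helper moves
  have hDmove : ∀ a b : L, (inner ℂ (D a) b : ℂ) = inner ℂ a (D b) := by
    intro a b
    rw [← adjoint_inner_left D b a, hDsa]
  have hD'move : ∀ a b : L', (inner ℂ (D' a) b : ℂ) = inner ℂ a (D' b) := by
    intro a b
    rw [← adjoint_inner_left D' b a, hD'sa]
  -- norm identities
  have normD : ∀ v : L, ‖D v‖ ^ 2 = ‖v‖ ^ 2 - ‖s v‖ ^ 2 := by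
    intro v
    have h1 : (inner ℂ (D v) (D v) : ℂ) = inner ℂ v v - inner ℂ (s v) (s v) := by
      calc (inner ℂ (D v) (D v) : ℂ)
          = inner ℂ v (D (D v)) := hDmove v (D v)
        _ = inner ℂ v (v - ContinuousLinearMap.adjoint s (s v)) := by rw [hDsq]
        _ = inner ℂ v v - inner ℂ v (ContinuousLinearMap.adjoint s (s v)) := inner_sub_right ..
        _ = inner ℂ v v - inner ℂ (s v) (s v) := by rw [adjoint_inner_right]
    calc ‖D v‖ ^ 2 = RCLike.re (inner ℂ (D v) (D v) : ℂ) := (inner_self_eq_norm_sq _).symm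
      _ = RCLike.re ((inner ℂ v v : ℂ) - inner ℂ (s v) (s v)) := by rw [h1]
      _ = ‖v‖ ^ 2 - ‖s v‖ ^ 2 := by
          rw [map_sub, inner_self_eq_norm_sq, inner_self_eq_norm_sq]
  have normD' : ∀ w : L', ‖D' w‖ ^ 2 = ‖w‖ ^ 2 - ‖ContinuousLinearMap.adjoint s w‖ ^ 2 := by
    intro w
    have h1 : (inner ℂ (D' w) (D' w) : ℂ)
        = inner ℂ w w - inner ℂ (ContinuousLinearMap.adjoint s w) (ContinuousLinearMap.adjoint s w) := by
      calc (inner ℂ (D' w) (D' w) : ℂ)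
          = inner ℂ w (D' (D' w)) := hD'move w (D' w)
        _ = inner ℂ w (w - s (ContinuousLinearMap.adjoint s w)) := by rw [hD'sq]
        _ = inner ℂ w w - inner ℂ w (s (ContinuousLinearMap.adjoint s w)) := inner_sub_right ..
        _ = inner ℂ w w
            - inner ℂ (ContinuousLinearMap.adjoint s w) (ContinuousLinearMap.adjoint s w) := by
            rw [adjoint_inner_left s (ContinuousLinearMap.adjoint s w) w]
    calc ‖D' w‖ ^ 2 = RCLike.re (inner ℂ (D' w) (D' w) : ℂ) := (inner_self_eq_norm_sq _).symm
      _ = RCLike.re ((inner ℂ w w : ℂ)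
          - inner ℂ (ContinuousLinearMap.adjoint s w) (ContinuousLinearMap.adjoint s w)) := by
          rw [h1]
      _ = ‖w‖ ^ 2 - ‖ContinuousLinearMap.adjoint s w‖ ^ 2 := by
          rw [map_sub, inner_self_eq_norm_sq, inner_self_eq_norm_sq]
  -- the key inequality ‖D (s† z)‖ ≤ ‖D' z‖
  have keyineq : ∀ z : L', ‖D (ContinuousLinearMap.adjoint s z)‖ ≤ ‖D' z‖ := by
    intro z
    set v : L := ContinuousLinearMap.adjoint s z with hv
    have h1 : (inner ℂ v v : ℂ) = inner ℂ z (s v) := adjoint_inner_left s v z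
    have ht : ‖v‖ ^ 2 ≤ ‖z‖ * ‖s v‖ := by
      calc ‖v‖ ^ 2 = RCLike.re (inner ℂ v v : ℂ) := (inner_self_eq_norm_sq v).symm
        _ = RCLike.re (inner ℂ z (s v) : ℂ) := by rw [h1]
        _ ≤ ‖(inner ℂ z (s v) : ℂ)‖ := RCLike.re_le_norm _
        _ ≤ ‖z‖ * ‖s v‖ := norm_inner_le_norm ..
    have hsq : ‖D v‖ ^ 2 ≤ ‖D' z‖ ^ 2 := by
      rw [normD, normD', ← hv]
      nlinarith [sq_nonneg (‖z‖ - ‖s v‖)]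
    calc ‖D v‖ = √(‖D v‖ ^ 2) := (Real.sqrt_sq (norm_nonneg _)).symm
      _ ≤ √(‖D' z‖ ^ 2) := Real.sqrt_le_sqrt hsq
      _ = ‖D' z‖ := Real.sqrt_sq (norm_nonneg _)
  -- the main inner-product identity
  have hℓ : ℓ = D x + ContinuousLinearMap.adjoint s ℓ' := sub_eq_iff_eq_add.mp hx.symm
  have hid : ∀ z : L', (inner ℂ (ℓ' - s ℓ) z : ℂ)
      = inner ℂ (D' ℓ') (D' z) - inner ℂ x (D (ContinuousLinearMap.adjoint s z)) := by
    intro z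
    have h1 : (inner ℂ (s ℓ) z : ℂ) = inner ℂ ℓ (ContinuousLinearMap.adjoint s z) :=
      (adjoint_inner_right s ℓ z).symm
    have h2 : (inner ℂ ℓ (ContinuousLinearMap.adjoint s z) : ℂ)
        = inner ℂ x (D (ContinuousLinearMap.adjoint s z))
          + inner ℂ ℓ' (s (ContinuousLinearMap.adjoint s z)) := by
      rw [hℓ, inner_add_left]
      congr 1
      · exact hDmove x (ContinuousLinearMap.adjoint s z)
      · exact adjoint_inner_left s (ContinuousLinearMap.adjoint s z) ℓ'
    have h3 : (inner ℂ ℓ' z : ℂ) - inner ℂ ℓ' (s (ContinuousLinearMap.adjoint s z))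
        = inner ℂ (D' ℓ') (D' z) := by
      rw [← inner_sub_right, ← hD'sq, ← hD'move ℓ' (D' z)]
    rw [inner_sub_left, h1, h2, ← h3]
    ring
  -- apply the range criterion
  apply mem_range_of_inner_bound D' (ℓ' - s ℓ) (‖D' ℓ'‖ + ‖x‖)
  intro z
  rw [hD'sa, hid z]
  calc ‖(inner ℂ (D' ℓ') (D' z) : ℂ) - inner ℂ x (D (ContinuousLinearMap.adjoint s z))‖
      ≤ ‖(inner ℂ (D' ℓ') (D' z) : ℂ)‖ + ‖(inner ℂ x (D (ContinuousLinearMap.adjoint s z)) : ℂ)‖ :=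
        norm_sub_le _ _
    _ ≤ ‖D' ℓ'‖ * ‖D' z‖ + ‖x‖ * ‖D (ContinuousLinearMap.adjoint s z)‖ := by
        gcongr <;> exact norm_inner_le_norm ..
    _ ≤ ‖D' ℓ'‖ * ‖D' z‖ + ‖x‖ * ‖D' z‖ := by
        gcongr
        exact keyineq z
    _ = (‖D' ℓ'‖ + ‖x‖) * ‖D' z‖ := by ring

set_option synthInstance.maxHeartbeats 1000000 in
/-- For a contraction `s : L → L'` and vectors `ℓ ∈ L`, `ℓ' ∈ L'`:
`ℓ - s*ℓ' ∈ Ran (I - s*s)^{1/2}` iff `ℓ' - sℓ ∈ Ran (I - ss*)^{1/2}`. -/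
theorem defect_range_mem_iff
    (L L' : Type*) [NormedAddCommGroup L] [InnerProductSpace ℂ L] [CompleteSpace L]
    [NormedAddCommGroup L'] [InnerProductSpace ℂ L'] [CompleteSpace L']
    (s : L →L[ℂ] L') (hs : ‖s‖ ≤ 1) (ℓ : L) (ℓ' : L') :
    (ℓ - ContinuousLinearMap.adjoint s ℓ'
        ∈ Set.range ((CFC.sqrt (1 - ContinuousLinearMap.adjoint s ∘L s) : L →L[ℂ] L) : L → L))
      ↔ (ℓ' - s ℓ
        ∈ Set.range ((CFC.sqrt (1 - s ∘L ContinuousLinearMap.adjoint s) : L' →L[ℂ] L') : L' → L')) := by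
  constructor
  · exact defect_range_aux s hs ℓ ℓ'
  · intro h
    have hs' : ‖ContinuousLinearMap.adjoint s‖ ≤ 1 := by
      rw [LinearIsometryEquiv.norm_map]; exact hs
    have := defect_range_aux (ContinuousLinearMap.adjoint s) hs' ℓ' ℓ ?_
    · rwa [ContinuousLinearMap.adjoint_adjoint] at this
    · rwa [ContinuousLinearMap.adjoint_adjoint]
end

section
/- Sarason Fundamental Identity: with T the compressed shift on K_θ, W a contraction on K_θ commuting with T, Ex = ⟨x, e_*⟩, Mx = ⟨Wx, e_*⟩ and D(x,y) = ⟨(I - W*W)x, y⟩, one has D(x,y) - D(Tx,Ty) = ⟨Ex, Ey⟩_ℂ - ⟨Mx, My⟩_ℂ for all x, y ∈ K_θ. -/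
/-!
On `K = (ran Θ)ᗮ` the compressed shift is `T x = Sh x - Θ Θ* Sh x`. For `x ∈ K` the vector
`Θ* Sh x` is orthogonal to `ran Sh`, because `Θ` commutes with the isometry `Sh`; so it is
`⟪Θ e₀, Sh x⟫ e₀ = ⟪e_*, x⟫ e₀` with `e_* = Sh* Θ e₀`. Expanding `⟪T a, T b⟫` then gives the defect identity
`T* T = I - e_* ⊗ e_*`, and since `W T = T W`, `D(T x, T y) = ⟪T x, T y⟫ - ⟪T W x, T W y⟫`
reduces the Sarason identity to two instances of the defect identity.
-/

open scoped InnerProductSpace InnerProduct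

section Isometry

variable {𝕜 E F : Type*} [RCLike 𝕜]
  [NormedAddCommGroup E] [InnerProductSpace 𝕜 E] [CompleteSpace E]
  [NormedAddCommGroup F] [InnerProductSpace 𝕜 F] [CompleteSpace F]

theorem starProjection_orthogonal_range_apply_of_isometry {Θ : E →L[𝕜] F}
    (hΘ : ∀ x, ‖Θ x‖ = ‖x‖) (v : F) :
    (LinearMap.range (Θ : E →ₗ[𝕜] F))ᗮ.starProjection v = v - Θ ((Θ†) v) := by
  have hΘi : ∀ a b, ⟪Θ a, Θ b⟫_𝕜 = ⟪a, b⟫_𝕜 :=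
    (LinearMap.norm_map_iff_inner_map_map (𝕜 := 𝕜) Θ).mp hΘ
  refine Submodule.eq_starProjection_of_mem_orthogonal' ?_
    (Submodule.le_orthogonal_orthogonal _ ⟨(Θ†) v, rfl⟩) (sub_add_cancel v _).symm
  rintro _ ⟨z, rfl⟩
  change ⟪Θ z, v - Θ ((Θ†) v)⟫_𝕜 = 0
  rw [inner_sub_right, hΘi, ContinuousLinearMap.adjoint_inner_right, sub_self]

end Isometry

theorem eq_inner_smul_of_mem_span_singleton {𝕜 E : Type*} [RCLike 𝕜] [NormedAddCommGroup E]
    [InnerProductSpace 𝕜 E] {e u : E} (he : ‖e‖ = 1) (hu : u ∈ 𝕜 ∙ e) : u = ⟪e, u⟫_𝕜 • e := by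
  rw [← Submodule.starProjection_unit_singleton 𝕜 he, Submodule.starProjection_eq_self_iff.mpr hu]

section CompressedShift

variable {H : Type*} [NormedAddCommGroup H] [InnerProductSpace ℂ H] [CompleteSpace H]
  {Sh Θ : H →L[ℂ] H} {e₀ : H}

theorem adjoint_apply_shift_of_mem_orthogonal_range (hSh : ∀ x, ‖Sh x‖ = ‖x‖) (he₀ : ‖e₀‖ = 1)
    (hwander : (LinearMap.range (Sh : H →ₗ[ℂ] H))ᗮ = ℂ ∙ e₀) (hcomm : Θ ∘L Sh = Sh ∘L Θ)
    {x : H} (hx : x ∈ (LinearMap.range (Θ : H →ₗ[ℂ] H))ᗮ) :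
    (Θ†) (Sh x) = ⟪Θ e₀, Sh x⟫_ℂ • e₀ := by
  have hShi : ∀ a b, ⟪Sh a, Sh b⟫_ℂ = ⟪a, b⟫_ℂ :=
    (LinearMap.norm_map_iff_inner_map_map (𝕜 := ℂ) Sh).mp hSh
  have hmem : (Θ†) (Sh x) ∈ (LinearMap.range (Sh : H →ₗ[ℂ] H))ᗮ := by
    rintro _ ⟨w, rfl⟩
    change ⟪Sh w, (Θ†) (Sh x)⟫_ℂ = 0
    rw [ContinuousLinearMap.adjoint_inner_right, ← ContinuousLinearMap.comp_apply, hcomm,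
      ContinuousLinearMap.comp_apply, hShi]
    exact hx _ ⟨w, rfl⟩
  rw [hwander] at hmem
  rw [eq_inner_smul_of_mem_span_singleton he₀ hmem, ContinuousLinearMap.adjoint_inner_right]

theorem compressedShift_apply (hSh : ∀ x, ‖Sh x‖ = ‖x‖) (he₀ : ‖e₀‖ = 1)
    (hwander : (LinearMap.range (Sh : H →ₗ[ℂ] H))ᗮ = ℂ ∙ e₀) (hΘ : ∀ x, ‖Θ x‖ = ‖x‖)
    (hcomm : Θ ∘L Sh = Sh ∘L Θ) {x : H} (hx : x ∈ (LinearMap.range (Θ : H →ₗ[ℂ] H))ᗮ) :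
    (LinearMap.range (Θ : H →ₗ[ℂ] H))ᗮ.starProjection (Sh x) = Sh x - ⟪Θ e₀, Sh x⟫_ℂ • Θ e₀ := by
  rw [starProjection_orthogonal_range_apply_of_isometry hΘ,
    adjoint_apply_shift_of_mem_orthogonal_range hSh he₀ hwander hcomm hx, map_smul]

theorem inner_compressedShift (hSh : ∀ x, ‖Sh x‖ = ‖x‖) (he₀ : ‖e₀‖ = 1)
    (hwander : (LinearMap.range (Sh : H →ₗ[ℂ] H))ᗮ = ℂ ∙ e₀) (hΘ : ∀ x, ‖Θ x‖ = ‖x‖)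
    (hcomm : Θ ∘L Sh = Sh ∘L Θ) {a b : H} (ha : a ∈ (LinearMap.range (Θ : H →ₗ[ℂ] H))ᗮ)
    (hb : b ∈ (LinearMap.range (Θ : H →ₗ[ℂ] H))ᗮ) :
    ⟪(LinearMap.range (Θ : H →ₗ[ℂ] H))ᗮ.starProjection (Sh a),
        (LinearMap.range (Θ : H →ₗ[ℂ] H))ᗮ.starProjection (Sh b)⟫_ℂ
      = ⟪a, b⟫_ℂ - starRingEnd ℂ ⟪(Sh†) (Θ e₀), a⟫_ℂ * ⟪(Sh†) (Θ e₀), b⟫_ℂ := by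
  have hShi : ∀ a b, ⟪Sh a, Sh b⟫_ℂ = ⟪a, b⟫_ℂ :=
    (LinearMap.norm_map_iff_inner_map_map (𝕜 := ℂ) Sh).mp hSh
  have hΘe₀ : ⟪Θ e₀, Θ e₀⟫_ℂ = 1 := by
    rw [inner_self_eq_norm_sq_to_K, hΘ, he₀]; norm_num
  rw [compressedShift_apply hSh he₀ hwander hΘ hcomm ha,
    compressedShift_apply hSh he₀ hwander hΘ hcomm hb,
    ContinuousLinearMap.adjoint_inner_left, ContinuousLinearMap.adjoint_inner_left]
  simp only [inner_sub_left, inner_sub_right, inner_smul_left, inner_smul_right, hShi, hΘe₀,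
    ← inner_conj_symm (Sh a) (Θ e₀)]
  ring

end CompressedShift

theorem inner_defect_sub_inner_defect_of_commute {E : Type*} [NormedAddCommGroup E]
    [InnerProductSpace ℂ E] [CompleteSpace E] {T W : E →L[ℂ] E} {e : E}
    (hT : ∀ a b, ⟪T a, T b⟫_ℂ = ⟪a, b⟫_ℂ - starRingEnd ℂ ⟪e, a⟫_ℂ * ⟪e, b⟫_ℂ)
    (hWT : W ∘L T = T ∘L W) (x y : E) :
    ⟪y, x - (W†) (W x)⟫_ℂ - ⟪T y, T x - (W†) (W (T x))⟫_ℂ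
      = ⟪e, x⟫_ℂ * starRingEnd ℂ ⟪e, y⟫_ℂ - ⟪e, W x⟫_ℂ * starRingEnd ℂ ⟪e, W y⟫_ℂ := by
  have hWTapply (z : E) : W (T z) = T (W z) := congr($hWT z)
  simp only [inner_sub_right, ContinuousLinearMap.adjoint_inner_right, hWTapply, hT]
  ring

theorem sarason_fundamental_identity_general
    (H : Type*) [NormedAddCommGroup H] [InnerProductSpace ℂ H] [CompleteSpace H]
    (Sh : H →L[ℂ] H) (hSh : ∀ x : H, ‖Sh x‖ = ‖x‖)
    (e₀ : H) (he₀ : ‖e₀‖ = 1)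
    (hwander : (LinearMap.range (Sh : H →ₗ[ℂ] H))ᗮ = Submodule.span ℂ {e₀})
    (Θ : H →L[ℂ] H) (hΘ : ∀ x : H, ‖Θ x‖ = ‖x‖) (hcomm : Θ ∘L Sh = Sh ∘L Θ)
    (T : ((LinearMap.range (Θ : H →ₗ[ℂ] H))ᗮ : Submodule ℂ H) →L[ℂ] ((LinearMap.range (Θ : H →ₗ[ℂ] H))ᗮ : Submodule ℂ H))
    (hT : ∀ x : ((LinearMap.range (Θ : H →ₗ[ℂ] H))ᗮ : Submodule ℂ H),
      T x = Submodule.orthogonalProjectionOnto ((LinearMap.range (Θ : H →ₗ[ℂ] H))ᗮ : Submodule ℂ H) (Sh (x : H)))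
    (hestar : ContinuousLinearMap.adjoint Sh (Θ e₀) ∈ ((LinearMap.range (Θ : H →ₗ[ℂ] H))ᗮ : Submodule ℂ H))
    (W : ((LinearMap.range (Θ : H →ₗ[ℂ] H))ᗮ : Submodule ℂ H) →L[ℂ] ((LinearMap.range (Θ : H →ₗ[ℂ] H))ᗮ : Submodule ℂ H))
    (hWT : W ∘L T = T ∘L W) :
    ∀ x y : ((LinearMap.range (Θ : H →ₗ[ℂ] H))ᗮ : Submodule ℂ H),
      letI estar : ((LinearMap.range (Θ : H →ₗ[ℂ] H))ᗮ : Submodule ℂ H) :=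
        ⟨ContinuousLinearMap.adjoint Sh (Θ e₀), hestar⟩
      letI D : ((LinearMap.range (Θ : H →ₗ[ℂ] H))ᗮ : Submodule ℂ H) →
          ((LinearMap.range (Θ : H →ₗ[ℂ] H))ᗮ : Submodule ℂ H) → ℂ :=
        fun u v => ⟪v, u - ContinuousLinearMap.adjoint W (W u)⟫_ℂ
      letI E : ((LinearMap.range (Θ : H →ₗ[ℂ] H))ᗮ : Submodule ℂ H) → ℂ := fun u => ⟪estar, u⟫_ℂ
      letI M : ((LinearMap.range (Θ : H →ₗ[ℂ] H))ᗮ : Submodule ℂ H) → ℂ := fun u => ⟪estar, W u⟫_ℂ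
      D x y - D (T x) (T y)
        = E x * (starRingEnd ℂ) (E y) - M x * (starRingEnd ℂ) (M y) := by
  refine inner_defect_sub_inner_defect_of_commute (e := ⟨_, hestar⟩) (fun a b => ?_) hWT
  simp only [Submodule.coe_inner, hT, Submodule.coe_orthogonalProjectionOnto_apply]
  exact inner_compressedShift hSh he₀ hwander hΘ hcomm a.2 b.2

/-- Sarason Fundamental Identity, in the Beurling coordinate-free model of `H²` (`H` Hilbert,
`Sh` a unilateral shift of multiplicity one with cyclic wandering unit vector `e₀`, `Θ` an
isometry commuting with `Sh`, i.e. multiplication by an inner function `θ`;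
`Kθ = (Ran Θ)ᗮ`, `T` the compressed shift on `Kθ`, `e_* = Sh*(Θ e₀) ∈ Kθ` models
`(θ(t) - θ(0))/t`).  For a contraction `W` on `Kθ` commuting with `T`, with
`Ex = ⟨x, e_*⟩`, `Mx = ⟨Wx, e_*⟩` and `D(x,y) = ⟨(I - W*W)x, y⟩`, one has
`D(x,y) - D(Tx,Ty) = ⟨Ex, Ey⟩ - ⟨Mx, My⟩` for all `x, y ∈ Kθ`. -/
theorem sarason_fundamental_identity
    (H : Type*) [NormedAddCommGroup H] [InnerProductSpace ℂ H] [CompleteSpace H]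
    (Sh : H →L[ℂ] H) (hSh : ∀ x : H, ‖Sh x‖ = ‖x‖)
    (e₀ : H) (he₀ : ‖e₀‖ = 1)
    (hwander : (LinearMap.range (Sh : H →ₗ[ℂ] H))ᗮ = Submodule.span ℂ {e₀})
    (hcyclic : (Submodule.span ℂ (Set.range fun n : ℕ => (Sh ^ n) e₀)).topologicalClosure = ⊤)
    (Θ : H →L[ℂ] H) (hΘ : ∀ x : H, ‖Θ x‖ = ‖x‖) (hcomm : Θ ∘L Sh = Sh ∘L Θ)
    (T : ((LinearMap.range (Θ : H →ₗ[ℂ] H))ᗮ : Submodule ℂ H) →L[ℂ] ((LinearMap.range (Θ : H →ₗ[ℂ] H))ᗮ : Submodule ℂ H))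
    (hT : ∀ x : ((LinearMap.range (Θ : H →ₗ[ℂ] H))ᗮ : Submodule ℂ H),
      T x = Submodule.orthogonalProjectionOnto ((LinearMap.range (Θ : H →ₗ[ℂ] H))ᗮ : Submodule ℂ H) (Sh (x : H)))
    (hestar : ContinuousLinearMap.adjoint Sh (Θ e₀) ∈ ((LinearMap.range (Θ : H →ₗ[ℂ] H))ᗮ : Submodule ℂ H))
    (W : ((LinearMap.range (Θ : H →ₗ[ℂ] H))ᗮ : Submodule ℂ H) →L[ℂ] ((LinearMap.range (Θ : H →ₗ[ℂ] H))ᗮ : Submodule ℂ H))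
    (hW : ‖W‖ ≤ 1) (hWT : W ∘L T = T ∘L W) :
    ∀ x y : ((LinearMap.range (Θ : H →ₗ[ℂ] H))ᗮ : Submodule ℂ H),
      letI estar : ((LinearMap.range (Θ : H →ₗ[ℂ] H))ᗮ : Submodule ℂ H) :=
        ⟨ContinuousLinearMap.adjoint Sh (Θ e₀), hestar⟩
      letI D : ((LinearMap.range (Θ : H →ₗ[ℂ] H))ᗮ : Submodule ℂ H) →
          ((LinearMap.range (Θ : H →ₗ[ℂ] H))ᗮ : Submodule ℂ H) → ℂ :=
        fun u v => ⟪v, u - ContinuousLinearMap.adjoint W (W u)⟫_ℂ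
      letI E : ((LinearMap.range (Θ : H →ₗ[ℂ] H))ᗮ : Submodule ℂ H) → ℂ := fun u => ⟪estar, u⟫_ℂ
      letI M : ((LinearMap.range (Θ : H →ₗ[ℂ] H))ᗮ : Submodule ℂ H) → ℂ := fun u => ⟪estar, W u⟫_ℂ
      D x y - D (T x) (T y)
        = E x * (starRingEnd ℂ) (E y) - M x * (starRingEnd ℂ) (M y) :=
  sarason_fundamental_identity_general H Sh hSh e₀ he₀ hwander Θ hΘ hcomm T hT hestar W hWT
end

section
/- Suppose D is a sesquilinear form on X, T, E, M linear maps satisfying the Fundamental Identity D(x,y) - D(Tx,Ty) = ⟨Ex,Ey⟩_L - ⟨Mx,My⟩_{L'}. Fix ζ with |ζ|<1 and a contraction s(ζ) : L → L'. Then for all y₁, y₂ ∈ X: (1/2)D((T+ζI)y₁, (I - conj(ζ)T)y₂) - ζ⟨Ey₁, (E - s(ζ)*M)y₂⟩ = (1/2)D((T-ζI)y₁, (I + conj(ζ)T)y₂) + ζ⟨(s(ζ)E - M)y₁, My₂⟩. -/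
/-!
Expanding `D` sesquilinearly, the difference of the two `D`-terms is `ζ (D(y₁,y₂) - D(Ty₁,Ty₂))`,
which the Fundamental Identity turns into `ζ (⟨Ey₂,Ey₁⟩ - ⟨My₂,My₁⟩)`; on the inner-product side
the two occurrences of `s` cancel through the adjoint, leaving exactly the same expression.
-/

open scoped InnerProductSpace

theorem LinearMap.sesq_apply_add_smul_sub_apply_sub_smul {R X : Type*} [CommRing R] [StarRing R]
    [AddCommGroup X] [Module R X] (D : X →ₗ[R] X →ₗ⋆[R] R) (T : X →ₗ[R] X) (ζ : R) (x y : X) :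
    D (T x + ζ • x) (y - starRingEnd R ζ • T y) - D (T x - ζ • x) (y + starRingEnd R ζ • T y)
      = 2 * ζ * (D x y - D (T x) (T y)) := by
  simp only [map_add, map_sub, map_smul, LinearMap.map_smulₛₗ, LinearMap.add_apply,
    LinearMap.sub_apply, LinearMap.smul_apply, smul_eq_mul, starRingEnd_self_apply]
  ring

theorem ContinuousLinearMap.inner_sub_adjoint_left_add_inner_sub_right {𝕜 L L' : Type*} [RCLike 𝕜]
    [NormedAddCommGroup L] [InnerProductSpace 𝕜 L] [CompleteSpace L]
    [NormedAddCommGroup L'] [InnerProductSpace 𝕜 L'] [CompleteSpace L']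
    (s : L →L[𝕜] L') (e e' : L) (m m' : L') :
    ⟪e - adjoint s m, e'⟫_𝕜 + ⟪m, s e' - m'⟫_𝕜 = ⟪e, e'⟫_𝕜 - ⟪m, m'⟫_𝕜 := by
  rw [inner_sub_left, inner_sub_right, adjoint_inner_left]
  ring

set_option synthInstance.maxHeartbeats 1000000 in
theorem fundamental_identity_consequence_general
    (X : Type*) [AddCommGroup X] [Module ℂ X]
    (L L' : Type*) [NormedAddCommGroup L] [InnerProductSpace ℂ L] [CompleteSpace L]
    [NormedAddCommGroup L'] [InnerProductSpace ℂ L'] [CompleteSpace L']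
    (D : X →ₗ[ℂ] X →ₗ⋆[ℂ] ℂ) (T : X →ₗ[ℂ] X) (E : X →ₗ[ℂ] L) (M : X →ₗ[ℂ] L')
    (hFI : ∀ x y : X, D x y - D (T x) (T y) = ⟪E y, E x⟫_ℂ - ⟪M y, M x⟫_ℂ)
    (ζ : ℂ) (s : L →L[ℂ] L') :
    ∀ y₁ y₂ : X,
      (1 / 2 : ℂ) * D (T y₁ + ζ • y₁) (y₂ - (starRingEnd ℂ) ζ • T y₂)
          - ζ * ⟪E y₂ - ContinuousLinearMap.adjoint s (M y₂), E y₁⟫_ℂ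
        = (1 / 2 : ℂ) * D (T y₁ - ζ • y₁) (y₂ + (starRingEnd ℂ) ζ • T y₂)
            + ζ * ⟪M y₂, s (E y₁) - M y₁⟫_ℂ := by
  intro y₁ y₂
  linear_combination (1 / 2 : ℂ) * D.sesq_apply_add_smul_sub_apply_sub_smul T ζ y₁ y₂
    + ζ * hFI y₁ y₂
    - ζ * s.inner_sub_adjoint_left_add_inner_sub_right (E y₂) (E y₁) (M y₂) (M y₁)

set_option synthInstance.maxHeartbeats 1000000 in
/-- Identity (13): if the sesquilinear form `D` (linear in the first argument, conjugate-linear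
in the second) and the linear maps `T, E, M` satisfy the Fundamental Identity
`D(x,y) - D(Tx,Ty) = ⟨Ex,Ey⟩ - ⟨Mx,My⟩`, then for a fixed `ζ` with `|ζ| < 1` and a
contraction `s = s(ζ) : L → L'`, for all `y₁, y₂`:
`(1/2)D((T+ζI)y₁, (I - conj ζ·T)y₂) - ζ⟨Ey₁, (E - s*M)y₂⟩
  = (1/2)D((T-ζI)y₁, (I + conj ζ·T)y₂) + ζ⟨(sE - M)y₁, My₂⟩`. -/
theorem fundamental_identity_consequence
    (X : Type*) [AddCommGroup X] [Module ℂ X]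
    (L L' : Type*) [NormedAddCommGroup L] [InnerProductSpace ℂ L] [CompleteSpace L]
    [NormedAddCommGroup L'] [InnerProductSpace ℂ L'] [CompleteSpace L']
    (D : X →ₗ[ℂ] X →ₗ⋆[ℂ] ℂ) (T : X →ₗ[ℂ] X) (E : X →ₗ[ℂ] L) (M : X →ₗ[ℂ] L')
    (hFI : ∀ x y : X, D x y - D (T x) (T y) = ⟪E y, E x⟫_ℂ - ⟪M y, M x⟫_ℂ)
    (ζ : ℂ) (hζ : ‖ζ‖ < 1) (s : L →L[ℂ] L') (hs : ‖s‖ ≤ 1) :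
    ∀ y₁ y₂ : X,
      (1 / 2 : ℂ) * D (T y₁ + ζ • y₁) (y₂ - (starRingEnd ℂ) ζ • T y₂)
          - ζ * ⟪E y₂ - ContinuousLinearMap.adjoint s (M y₂), E y₁⟫_ℂ
        = (1 / 2 : ℂ) * D (T y₁ - ζ • y₁) (y₂ + (starRingEnd ℂ) ζ • T y₂)
            + ζ * ⟪M y₂, s (E y₁) - M y₁⟫_ℂ :=
  fundamental_identity_consequence_general X L L' D T E M hFI ζ s
end

section
/- The isometry V in the extension theory: assume D is a nonnegative sesquilinear form on X and T, E, M satisfy the Fundamental Identity D(x,y) - D(Tx,Ty) = ⟨Ex,Ey⟩ - ⟨Mx,My⟩. Let K be the Hilbert space completion of {Dx : x ∈ X} with inner product ⟨Dx₁, Dx₂⟩ = D(x₁,x₂). Then the map V(DTx ⊕ Ex) = Dx ⊕ Mx is well-defined and isometric from its domain in K ⊕ L to K ⊕ L'. -/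
/-!
Taking real parts of the Fundamental Identity at `(x, x)` gives
`‖Dx‖² + ‖Mx‖² = ‖DTx‖² + ‖Ex‖²`; applied to `x₁ - x₂`, this shows that `Dx ⊕ Mx` vanishes
whenever `DTx ⊕ Ex` does, which is well-definedness by linearity.
-/

open scoped InnerProductSpace

section

variable {𝕜 P Q R S : Type*} [RCLike 𝕜]
  [NormedAddCommGroup P] [InnerProductSpace 𝕜 P] [NormedAddCommGroup Q] [InnerProductSpace 𝕜 Q]
  [NormedAddCommGroup R] [InnerProductSpace 𝕜 R] [NormedAddCommGroup S] [InnerProductSpace 𝕜 S]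

theorem norm_sq_add_norm_sq_eq_of_inner_self_sub_eq {a : P} {b : Q} {c : R} {d : S}
    (h : ⟪a, a⟫_𝕜 - ⟪b, b⟫_𝕜 = ⟪c, c⟫_𝕜 - ⟪d, d⟫_𝕜) :
    ‖a‖ ^ 2 + ‖d‖ ^ 2 = ‖b‖ ^ 2 + ‖c‖ ^ 2 := by
  have h_re := congrArg RCLike.re h
  simp only [map_sub, inner_self_eq_norm_sq] at h_re
  linarith

end

theorem LinearMap.eq_and_eq_of_norm_sq_add_norm_sq_eq {A X P Q R S : Type*} [Ring A]
    [AddCommGroup X] [Module A X]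
    [NormedAddCommGroup P] [Module A P] [NormedAddCommGroup Q] [Module A Q]
    [NormedAddCommGroup R] [Module A R] [NormedAddCommGroup S] [Module A S]
    (f₁ : X →ₗ[A] P) (f₂ : X →ₗ[A] Q) (g₁ : X →ₗ[A] R) (g₂ : X →ₗ[A] S)
    (hnorm : ∀ x, ‖f₁ x‖ ^ 2 + ‖f₂ x‖ ^ 2 = ‖g₁ x‖ ^ 2 + ‖g₂ x‖ ^ 2)
    {x₁ x₂ : X} (h₁ : g₁ x₁ = g₁ x₂) (h₂ : g₂ x₁ = g₂ x₂) :
    f₁ x₁ = f₁ x₂ ∧ f₂ x₁ = f₂ x₂ := by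
  have h_sum : ‖f₁ (x₁ - x₂)‖ ^ 2 + ‖f₂ (x₁ - x₂)‖ ^ 2 = 0 := by
    rw [hnorm, map_sub, map_sub, h₁, h₂, sub_self, sub_self, norm_zero, norm_zero]
    ring
  obtain ⟨hf₁, hf₂⟩ := (add_eq_zero_iff_of_nonneg (by positivity) (by positivity)).mp h_sum
  simp only [map_sub, pow_eq_zero_iff two_ne_zero, norm_eq_zero, sub_eq_zero] at hf₁ hf₂
  exact ⟨hf₁, hf₂⟩

set_option synthInstance.maxHeartbeats 1000000 in
theorem extension_isometry_wellDefined_and_isometric_general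
    (X : Type*) [AddCommGroup X] [Module ℂ X]
    (L L' : Type*) [NormedAddCommGroup L] [InnerProductSpace ℂ L]
    [NormedAddCommGroup L'] [InnerProductSpace ℂ L']
    (K : Type*) [NormedAddCommGroup K] [InnerProductSpace ℂ K]
    (D : X →ₗ⋆[ℂ] X →ₗ[ℂ] ℂ)
    (ι : X →ₗ[ℂ] K) (hι : ∀ x y : X, ⟪ι x, ι y⟫_ℂ = D x y)
    (T : X →ₗ[ℂ] X) (E : X →ₗ[ℂ] L) (M : X →ₗ[ℂ] L')
    (hFI : ∀ x y : X, D x y - D (T x) (T y) = ⟪E x, E y⟫_ℂ - ⟪M x, M y⟫_ℂ) :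
    (∀ x₁ x₂ : X, ι (T x₁) = ι (T x₂) → E x₁ = E x₂ → ι x₁ = ι x₂ ∧ M x₁ = M x₂) ∧
      ∀ x : X, ‖ι x‖ ^ 2 + ‖M x‖ ^ 2 = ‖ι (T x)‖ ^ 2 + ‖E x‖ ^ 2 := by
  have isometric : ∀ x : X, ‖ι x‖ ^ 2 + ‖M x‖ ^ 2 = ‖ι (T x)‖ ^ 2 + ‖E x‖ ^ 2 := fun x ↦
    norm_sq_add_norm_sq_eq_of_inner_self_sub_eq (by rw [hι, hι]; exact hFI x x)
  exact ⟨fun x₁ x₂ hT hE ↦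
    ι.eq_and_eq_of_norm_sq_add_norm_sq_eq M (ι ∘ₗ T) E isometric hT hE, isometric⟩

set_option synthInstance.maxHeartbeats 1000000 in
/-- The isometry `V` of the extension theory: `D` is a nonnegative sesquilinear form on `X`
(conjugate-linear in the first argument), realized on the Hilbert-space completion `K` of
`{Dx : x ∈ X}` via a linear map `ι : X → K` with `⟨ιx₁, ιx₂⟩ = D(x₁,x₂)`, and `T, E, M`
satisfy the Fundamental Identity.  Then `V(DTx ⊕ Ex) = Dx ⊕ Mx` is well-defined (equal
arguments give equal values) and isometric: `‖Dx ⊕ Mx‖² = ‖DTx ⊕ Ex‖²`. -/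
theorem extension_isometry_wellDefined_and_isometric
    (X : Type*) [AddCommGroup X] [Module ℂ X]
    (L L' : Type*) [NormedAddCommGroup L] [InnerProductSpace ℂ L] [CompleteSpace L]
    [NormedAddCommGroup L'] [InnerProductSpace ℂ L'] [CompleteSpace L']
    (K : Type*) [NormedAddCommGroup K] [InnerProductSpace ℂ K] [CompleteSpace K]
    (D : X →ₗ⋆[ℂ] X →ₗ[ℂ] ℂ) (hpos : ∀ x : X, 0 ≤ (D x x).re)
    (ι : X →ₗ[ℂ] K) (hι : ∀ x y : X, ⟪ι x, ι y⟫_ℂ = D x y)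
    (hdense : DenseRange (ι : X → K))
    (T : X →ₗ[ℂ] X) (E : X →ₗ[ℂ] L) (M : X →ₗ[ℂ] L')
    (hFI : ∀ x y : X, D x y - D (T x) (T y) = ⟪E x, E y⟫_ℂ - ⟪M x, M y⟫_ℂ) :
    (∀ x₁ x₂ : X, ι (T x₁) = ι (T x₂) → E x₁ = E x₂ → ι x₁ = ι x₂ ∧ M x₁ = M x₂) ∧
      ∀ x : X, ‖ι x‖ ^ 2 + ‖M x‖ ^ 2 = ‖ι (T x)‖ ^ 2 + ‖E x‖ ^ 2 :=
  extension_isometry_wellDefined_and_isometric_general X L L' K D ι hι T E M hFI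
end

section
/- Eigenvector rigidity from the FMI: let ζ₀ with |ζ₀| < 1 be an eigenvalue of T with eigenvector x₀ (Tx₀ = ζ₀x₀), and suppose s satisfies the FMI, i.e., for all x ∈ X, ℓ ∈ L, |ζ|<1, the 2×2 matrix [[D((I-conj(ζ)T)x, (I-conj(ζ)T)x), ⟨ℓ, (E - s(ζ)*M)x⟩], [⟨(E - s(ζ)*M)x, ℓ⟩, ⟨(I - s(ζ)*s(ζ))/(1-|ζ|²) ℓ, ℓ⟩]] is positive semidefinite. Then s(ζ₀)Ex₀ = Mx₀. -/
/-!
At an eigenvector, `(I - ζ̄₀T)x₀ = (1 - |ζ₀|²)x₀`, so the Fundamental Identity evaluates the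
`(1,1)` entry of the FMI as `(1 - |ζ₀|²)(‖Ex₀‖² - ‖Mx₀‖²)`. Testing the FMI against `ℓ = Ex₀`, whose
off-diagonal entry has real part `‖Ex₀‖² - Re⟨Mx₀, s(ζ₀)Ex₀⟩`, the determinant condition of a
positive semidefinite `2 × 2` matrix and AM-GM give
`‖Mx₀‖² + ‖s(ζ₀)Ex₀‖² ≤ 2 Re⟨Mx₀, s(ζ₀)Ex₀⟩`, i.e. `‖Mx₀ - s(ζ₀)Ex₀‖² ≤ 0`.
-/

open scoped InnerProductSpace ComplexConjugate

-- The Hermitian matrix `!![a, b; conj b, d]` is positive semidefinite.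
def PosSemidef₂ (a b d : ℂ) : Prop :=
  ∀ c₁ c₂ : ℂ, 0 ≤ (conj c₁ * c₁ * a + conj c₁ * c₂ * b + conj c₂ * c₁ * conj b
    + conj c₂ * c₂ * d).re

namespace PosSemidef₂

variable {a b d : ℂ}

theorem re_nonneg_left (h : PosSemidef₂ a b d) : 0 ≤ a.re := by
  simpa using h 1 0

theorem re_nonneg_right (h : PosSemidef₂ a b d) : 0 ≤ d.re := by
  simpa using h 0 1

theorem normSq_le (h : PosSemidef₂ a b d) : Complex.normSq b ≤ a.re * d.re := by
  have hquad : ∀ t : ℝ,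
      0 ≤ a.re * (t * t) + (-(2 * Complex.normSq b)) * t + Complex.normSq b * d.re := by
    intro t
    have hnb : conj b * b = (Complex.normSq b : ℂ) := Complex.normSq_eq_conj_mul_self.symm
    have hform : conj (t : ℂ) * t * a + conj (t : ℂ) * (-conj b) * b + conj (-conj b) * t * conj b
        + conj (-conj b) * (-conj b) * d
        = (t : ℂ) * t * a - ((2 * t * Complex.normSq b : ℝ) : ℂ) + Complex.normSq b * d := by
      simp only [Complex.conj_ofReal, map_neg, Complex.conj_conj]
      push_cast
      linear_combination (-(2 : ℂ) * t + d) * hnb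
    have ht := h t (-conj b)
    rw [hform, Complex.add_re, Complex.sub_re, Complex.re_ofReal_mul, Complex.ofReal_re,
      ← Complex.ofReal_mul, Complex.re_ofReal_mul] at ht
    linarith
  have hdisc : Complex.normSq b * (Complex.normSq b - a.re * d.re) ≤ 0 := by
    have := discrim_le_zero hquad
    rw [discrim] at this
    nlinarith
  rcases (Complex.normSq_nonneg b).eq_or_lt with h0 | h0
  · rw [← h0]
    exact mul_nonneg h.re_nonneg_left h.re_nonneg_right
  · nlinarith

end PosSemidef₂

theorem add_le_two_mul_of_sq_sub_le {a m p r : ℝ} (hm : m ≤ a) (hp : p ≤ a)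
    (h : (a - r) ^ 2 ≤ (a - m) * (a - p)) : m + p ≤ 2 * r := by
  nlinarith [sq_nonneg (m - p)]

theorem eq_of_sq_sub_re_inner_le {𝕜 F : Type*} [RCLike 𝕜] [NormedAddCommGroup F]
    [InnerProductSpace 𝕜 F] {y z : F} {a : ℝ} (hy : ‖y‖ ^ 2 ≤ a) (hz : ‖z‖ ^ 2 ≤ a)
    (h : (a - RCLike.re ⟪y, z⟫_𝕜) ^ 2 ≤ (a - ‖y‖ ^ 2) * (a - ‖z‖ ^ 2)) : y = z := by
  have hsum := add_le_two_mul_of_sq_sub_le hy hz h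
  have : ‖y - z‖ ^ 2 ≤ 0 := by rw [norm_sub_sq (𝕜 := 𝕜)]; linarith
  exact sub_eq_zero.mp (norm_eq_zero.mp (by nlinarith [norm_nonneg (y - z)]))

theorem eq_of_posSemidef₂ {F : Type*} [NormedAddCommGroup F] [InnerProductSpace ℂ F]
    {y z : F} {K e : ℝ} {δ b : ℂ} (hK : 0 < K) (hδ : K * δ.re = e - ‖y‖ ^ 2)
    (hb : b.re = e - RCLike.re ⟪y, z⟫_ℂ)
    (h : PosSemidef₂ ((K ^ 2 : ℝ) * δ) b ((e - ‖z‖ ^ 2) / K : ℝ)) : y = z := by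
  have hy : ‖y‖ ^ 2 ≤ e := by
    have := h.re_nonneg_left
    rw [Complex.re_ofReal_mul] at this
    nlinarith [nonneg_of_mul_nonneg_right this (by positivity)]
  have hz : ‖z‖ ^ 2 ≤ e := by
    have := h.re_nonneg_right
    rw [Complex.ofReal_re] at this
    linarith [(le_div_iff₀ hK).mp this]
  refine eq_of_sq_sub_re_inner_le (𝕜 := ℂ) hy hz ?_
  calc _ = b.re * b.re := by rw [hb, sq]
    _ ≤ Complex.normSq b := Complex.re_sq_le_normSq b
    _ ≤ _ := h.normSq_le
    _ = _ := by
      rw [Complex.re_ofReal_mul, Complex.ofReal_re, ← hδ]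
      field_simp

theorem sub_conj_smul_apply_eq_of_apply_eq_smul {X : Type*} [AddCommGroup X] [Module ℂ X]
    {T : X →ₗ[ℂ] X} {ζ : ℂ} {x : X} (hx : T x = ζ • x) :
    x - conj ζ • T x = ((1 - ‖ζ‖ ^ 2 : ℝ) : ℂ) • x := by
  rw [hx, smul_smul, Complex.conj_mul']
  push_cast
  rw [sub_smul, one_smul]

theorem one_sub_norm_sq_mul_re_eq_of_apply_eq_smul {X L L' : Type*}
    [AddCommGroup X] [Module ℂ X] [SeminormedAddCommGroup L] [InnerProductSpace ℂ L]
    [SeminormedAddCommGroup L'] [InnerProductSpace ℂ L']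
    {D : X →ₗ⋆[ℂ] X →ₗ[ℂ] ℂ} {T : X →ₗ[ℂ] X} {E : X →ₗ[ℂ] L} {M : X →ₗ[ℂ] L'}
    (hFI : ∀ x y : X, D x y - D (T x) (T y) = ⟪E x, E y⟫_ℂ - ⟪M x, M y⟫_ℂ)
    {ζ : ℂ} {x : X} (hx : T x = ζ • x) :
    (1 - ‖ζ‖ ^ 2) * (D x x).re = ‖E x‖ ^ 2 - ‖M x‖ ^ 2 := by
  have h := hFI x x
  simp only [hx, map_smulₛₗ, LinearMap.smul_apply, smul_eq_mul, RingHom.id_apply,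
    inner_self_eq_norm_sq_to_K] at h
  have h' : ((1 - ‖ζ‖ ^ 2 : ℝ) : ℂ) * D x x = ((‖E x‖ ^ 2 - ‖M x‖ ^ 2 : ℝ) : ℂ) := by
    push_cast
    linear_combination h + D x x * Complex.conj_mul' ζ
  simpa only [Complex.re_ofReal_mul, Complex.ofReal_re] using congrArg Complex.re h'

theorem fmi_eigenvector_rigidity_general
    (X : Type*) [AddCommGroup X] [Module ℂ X]
    (L L' : Type*) [NormedAddCommGroup L] [InnerProductSpace ℂ L] [CompleteSpace L]
    [NormedAddCommGroup L'] [InnerProductSpace ℂ L'] [CompleteSpace L']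
    (D : X →ₗ⋆[ℂ] X →ₗ[ℂ] ℂ)
    (T : X →ₗ[ℂ] X) (E : X →ₗ[ℂ] L) (M : X →ₗ[ℂ] L')
    (hFI : ∀ x y : X, D x y - D (T x) (T y) = ⟪E x, E y⟫_ℂ - ⟪M x, M y⟫_ℂ)
    (s : ℂ → (L →L[ℂ] L'))
    (hFMI : ∀ (x : X) (ℓ : L) (ζ : ℂ), ‖ζ‖ < 1 → ∀ c₁ c₂ : ℂ,
      0 ≤ ((starRingEnd ℂ) c₁ * c₁
              * D (x - (starRingEnd ℂ) ζ • T x) (x - (starRingEnd ℂ) ζ • T x)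
            + (starRingEnd ℂ) c₁ * c₂
              * ⟪E x - ContinuousLinearMap.adjoint (s ζ) (M x), ℓ⟫_ℂ
            + (starRingEnd ℂ) c₂ * c₁
              * ⟪ℓ, E x - ContinuousLinearMap.adjoint (s ζ) (M x)⟫_ℂ
            + (starRingEnd ℂ) c₂ * c₂
              * ((⟪ℓ, ℓ⟫_ℂ - ⟪s ζ ℓ, s ζ ℓ⟫_ℂ) / (1 - (starRingEnd ℂ) ζ * ζ))).re)
    (ζ₀ : ℂ) (hζ₀ : ‖ζ₀‖ < 1) (x₀ : X) (heig : T x₀ = ζ₀ • x₀) :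
    s ζ₀ (E x₀) = M x₀ := by
  set K : ℝ := 1 - ‖ζ₀‖ ^ 2 with hK
  have hKpos : 0 < K := by nlinarith [norm_nonneg ζ₀]
  have hpsd : PosSemidef₂ ((K ^ 2 : ℝ) * D x₀ x₀)
      ⟪E x₀ - ContinuousLinearMap.adjoint (s ζ₀) (M x₀), E x₀⟫_ℂ
      ((‖E x₀‖ ^ 2 - ‖s ζ₀ (E x₀)‖ ^ 2) / K : ℝ) := by
    intro c₁ c₂
    convert hFMI x₀ (E x₀) ζ₀ hζ₀ c₁ c₂ using 5
    · rw [sub_conj_smul_apply_eq_of_apply_eq_smul heig]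
      simp only [map_smulₛₗ, LinearMap.smul_apply, smul_eq_mul, Complex.conj_ofReal,
        RingHom.id_apply]
      rw [hK]
      push_cast
      ring
    · rw [inner_conj_symm]
    · rw [Complex.conj_mul', inner_self_eq_norm_sq_to_K, inner_self_eq_norm_sq_to_K, hK]
      push_cast
      rfl
  refine (eq_of_posSemidef₂ hKpos (one_sub_norm_sq_mul_re_eq_of_apply_eq_smul hFI heig) ?_
    hpsd).symm
  rw [inner_sub_left, ContinuousLinearMap.adjoint_inner_left, inner_self_eq_norm_sq_to_K]
  norm_cast

set_option synthInstance.maxHeartbeats 1000000 in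
/-- Eigenvector rigidity from Potapov's Fundamental Matrix Inequality: if `ζ₀`, `|ζ₀| < 1`,
is an eigenvalue of `T` with eigenvector `x₀`, and `s` satisfies the FMI (for all `x`, `ℓ`
and `|ζ| < 1` the 2×2 matrix
`[[D((I-ζ̄T)x,(I-ζ̄T)x), ⟨ℓ,(E-s(ζ)*M)x⟩],[⟨(E-s(ζ)*M)x,ℓ⟩, ⟨(I-s(ζ)*s(ζ))ℓ,ℓ⟩/(1-|ζ|²)]]`
is positive semidefinite), then `s(ζ₀)Ex₀ = Mx₀`. -/
theorem fmi_eigenvector_rigidity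
    (X : Type*) [AddCommGroup X] [Module ℂ X]
    (L L' : Type*) [NormedAddCommGroup L] [InnerProductSpace ℂ L] [CompleteSpace L]
    [NormedAddCommGroup L'] [InnerProductSpace ℂ L'] [CompleteSpace L']
    (D : X →ₗ⋆[ℂ] X →ₗ[ℂ] ℂ)
    (hherm : ∀ x y : X, (starRingEnd ℂ) (D x y) = D y x)
    (hpos : ∀ x : X, 0 ≤ (D x x).re)
    (T : X →ₗ[ℂ] X) (E : X →ₗ[ℂ] L) (M : X →ₗ[ℂ] L')
    (hFI : ∀ x y : X, D x y - D (T x) (T y) = ⟪E x, E y⟫_ℂ - ⟪M x, M y⟫_ℂ)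
    (s : ℂ → (L →L[ℂ] L')) (hs : ∀ ζ : ℂ, ‖ζ‖ < 1 → ‖s ζ‖ ≤ 1)
    (hFMI : ∀ (x : X) (ℓ : L) (ζ : ℂ), ‖ζ‖ < 1 → ∀ c₁ c₂ : ℂ,
      0 ≤ ((starRingEnd ℂ) c₁ * c₁
              * D (x - (starRingEnd ℂ) ζ • T x) (x - (starRingEnd ℂ) ζ • T x)
            + (starRingEnd ℂ) c₁ * c₂
              * ⟪E x - ContinuousLinearMap.adjoint (s ζ) (M x), ℓ⟫_ℂ
            + (starRingEnd ℂ) c₂ * c₁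
              * ⟪ℓ, E x - ContinuousLinearMap.adjoint (s ζ) (M x)⟫_ℂ
            + (starRingEnd ℂ) c₂ * c₂
              * ((⟪ℓ, ℓ⟫_ℂ - ⟪s ζ ℓ, s ζ ℓ⟫_ℂ) / (1 - (starRingEnd ℂ) ζ * ζ))).re)
    (ζ₀ : ℂ) (hζ₀ : ‖ζ₀‖ < 1) (x₀ : X) (heig : T x₀ = ζ₀ • x₀) :
    s ζ₀ (E x₀) = M x₀ :=
  fmi_eigenvector_rigidity_general X L L' D T E M hFI s hFMI ζ₀ hζ₀ x₀ heig
end
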